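/- arXiv:2605.18726 — 2 statements merged into one kernel-verified Lean document; each statement's English description precedes it below -/
import Mathlib

section
/- For any n-type t on a finite alphabet 𝒳 and k ≤ n, the probability that the first k symbols of a uniformly random string from the type class T_{n,t} have type s (an k-type) is at most (1 - k/n)^{-k} times the probability that k i.i.d. samples from t have type s. Equivalently, binom(n,k)^{-1} ∏_x binom(n·t(x), k·s(x)) ≤ (1-k/n)^{-k} · binom(k, k·s) · ∏_x t(x)^{k·s(x)}. -/
open Finset Nat

namespace Nat

theorem choose_mul_factorial_le_pow (a b : ℕ) : a.choose b * b ! ≤ a ^ b := by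
  rw [mul_comm, ← descFactorial_eq_factorial_mul_choose]
  exact descFactorial_le_pow a b

theorem sub_pow_le_choose_mul_factorial (n k : ℕ) : (n - k) ^ k ≤ n.choose k * k ! :=
  calc (n - k) ^ k ≤ (n + 1 - k) ^ k := Nat.pow_le_pow_left (by omega) k
    _ ≤ n.descFactorial k := pow_sub_le_descFactorial n k
    _ = n.choose k * k ! := by rw [descFactorial_eq_factorial_mul_choose, mul_comm]

/-- Both sides multiplied by `∏ i, (s i)!` become `∏ i, (t i).descFactorial (s i) · (n - k)^k`
and `∏ i, t i ^ s i · n.descFactorial k`, which compare factor by factor. -/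
theorem prod_choose_mul_sub_pow_le {ι : Type*} (u : Finset ι) (t s : ι → ℕ) (n : ℕ) :
    (∏ i ∈ u, (t i).choose (s i)) * (n - ∑ i ∈ u, s i) ^ ∑ i ∈ u, s i
      ≤ n.choose (∑ i ∈ u, s i) * multinomial u s * ∏ i ∈ u, t i ^ s i := by
  set k := ∑ i ∈ u, s i
  refine Nat.le_of_mul_le_mul_left ?_ (prod_pos (s := u) fun i _ => factorial_pos (s i))
  calc (∏ i ∈ u, (s i)!) * ((∏ i ∈ u, (t i).choose (s i)) * (n - k) ^ k)
      = (∏ i ∈ u, (t i).choose (s i) * (s i)!) * (n - k) ^ k := by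
        rw [prod_mul_distrib]; ring
    _ ≤ (∏ i ∈ u, t i ^ s i) * (n.choose k * k !) :=
        Nat.mul_le_mul (prod_le_prod' fun i _ => choose_mul_factorial_le_pow _ _)
          (sub_pow_le_choose_mul_factorial n k)
    _ = (∏ i ∈ u, (s i)!) * (n.choose k * multinomial u s * ∏ i ∈ u, t i ^ s i) := by
        rw [← multinomial_spec]; ring

end Nat

theorem stmt_0_general {𝒳 : Type*} [Fintype 𝒳] (n k : ℕ) (hk : k < n)
    (t s : 𝒳 → ℕ) (hs : ∑ x, s x = k) :
    ((n.choose k : ℝ))⁻¹ * ∏ x, ((t x).choose (s x) : ℝ)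
      ≤ (1 - (k : ℝ) / n) ^ (-(k : ℤ)) *
        ((Nat.multinomial Finset.univ s : ℝ) * ∏ x, ((t x : ℝ) / n) ^ (s x)) := by
  have hkn : (k : ℝ) < n := by exact_mod_cast hk
  have hn : (n : ℝ) ≠ 0 := Nat.cast_ne_zero.mpr (by omega)
  have hgap : (0 : ℝ) < n - k := by linarith
  have hscale : (1 - (k : ℝ) / n) ^ (-(k : ℤ)) = (n : ℝ) ^ k / (n - k) ^ k := by
    rw [zpow_neg, zpow_natCast, one_sub_div hn, div_pow, inv_div]
  have hprod : ∏ x, ((t x : ℝ) / n) ^ (s x) = (∏ x, (t x : ℝ) ^ (s x)) / (n : ℝ) ^ k := by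
    simp_rw [div_pow]
    rw [prod_div_distrib, prod_pow_eq_pow_sum, hs]
  have key : (∏ x, ((t x).choose (s x) : ℝ)) * ((n : ℝ) - k) ^ k
      ≤ n.choose k * multinomial univ s * ∏ x, (t x : ℝ) ^ (s x) := by
    have := prod_choose_mul_sub_pow_le univ t s n
    rw [hs] at this
    have hsub : ((n - k : ℕ) : ℝ) = n - k := Nat.cast_sub hk.le
    rw [← hsub]
    exact_mod_cast this
  rw [hscale, hprod, inv_mul_le_iff₀ (by exact_mod_cast choose_pos hk.le)]
  calc _ ≤ (n.choose k * multinomial univ s * ∏ x, (t x : ℝ) ^ (s x)) / ((n : ℝ) - k) ^ k :=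
        (le_div_iff₀ (pow_pos hgap k)).mpr key
    _ = _ := by field_simp

/-- hypergeometric vs i.i.d. type probabilities.
For an `n`-type `t` (given by counts `t x` with `∑ x, t x = n`) and a `k`-type `s`
(counts with `∑ x, s x = k`), `k < n`, the hypergeometric probability of type `s`
is at most `(1 - k/n)^{-k}` times the i.i.d. probability
`binom(k, k·s) ∏_x (t x / n)^{s x}`. -/
theorem stmt_0 {𝒳 : Type*} [Fintype 𝒳] (n k : ℕ) (hk : k < n)
    (t s : 𝒳 → ℕ) (ht : ∑ x, t x = n) (hs : ∑ x, s x = k) :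
    ((n.choose k : ℝ))⁻¹ * ∏ x, ((t x).choose (s x) : ℝ)
      ≤ (1 - (k : ℝ) / n) ^ (-(k : ℤ)) *
        ((Nat.multinomial Finset.univ s : ℝ) * ∏ x, ((t x : ℝ) / n) ^ (s x)) :=
  stmt_0_general n k hk t s hs
end

section
/- Let t be an n-type and k ≤ n. The max-relative entropy of the k-marginal of the uniform distribution on the type class T_{n,t} with respect to t^{⊗k} is at most -k·log(1 - k/n); that is, D_max((u_t)_{[k]} ‖ t^{⊗k}) ≤ -k log(1 - k/n). -/
/-!
Write `T` for the type class and `T_y` for its strings with prefix `y ∈ 𝒳^k`. Double count the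
pairs `(f, σ)` with `f ∈ T` and `σ : [k] ↪ [n]` such that `f ∘ σ = y`. Permuting positions
preserves `T`, so every `σ` is matched by exactly `|T_y|` strings, giving `|T_y| · n!/(n-k)!`
pairs; a fixed `f` admits at most `∏ t(y_i)` such `σ`. Hence
`|T_y| / |T| ≤ ∏ t(y_i) / (n-k)^k = (1 - k/n)^{-k} ∏ t(y_i)/n`.
-/

open scoped Classical

/-- The empirical type of a string `f : Fin m → 𝒳`. -/
noncomputable def typeOf {𝒳 : Type*} [Fintype 𝒳] {m : ℕ} (f : Fin m → 𝒳) : 𝒳 → ℕ :=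
  fun x => (Finset.univ.filter fun i => f i = x).card

open Finset

section TypeClass

variable {𝒳 : Type*} [Fintype 𝒳] {n : ℕ}

noncomputable abbrev typeClass (n : ℕ) (t : 𝒳 → ℕ) : Finset (Fin n → 𝒳) :=
  univ.filter fun f => typeOf f = t

lemma typeOf_comp_perm (f : Fin n → 𝒳) (π : Equiv.Perm (Fin n)) :
    typeOf (f ∘ π) = typeOf f := by
  funext x
  refine card_nbij' π π.symm ?_ ?_ ?_ ?_ <;> intro i <;> simp

variable {α : Type*} [Fintype α]

lemma card_typeClass_filter_eq (t : 𝒳 → ℕ) (y : α → 𝒳) (e e' : α ↪ Fin n) :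
    ((typeClass n t).filter fun f => ∀ a, f (e a) = y a).card =
      ((typeClass n t).filter fun f => ∀ a, f (e' a) = y a).card := by
  obtain ⟨π, hπ⟩ := Equiv.Perm.exists_extending_pair e e' e.injective e'.injective
  refine card_nbij' (· ∘ π.symm) (· ∘ π) ?_ ?_ ?_ ?_
  · intro f hf
    simp only [typeClass, coe_filter, mem_filter, mem_univ, true_and] at hf ⊢
    refine ⟨by rw [typeOf_comp_perm, hf.1], fun a => ?_⟩
    simp [← hπ a, hf.2 a]
  · intro f hf
    simp only [typeClass, coe_filter, mem_filter, mem_univ, true_and] at hf ⊢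
    exact ⟨by rw [typeOf_comp_perm, hf.1], fun a => by simp [hπ a, hf.2 a]⟩
  · intro f _; ext; simp
  · intro f _; ext; simp

lemma card_embedding_filter_le (f : Fin n → 𝒳) (y : α → 𝒳) :
    (univ.filter fun σ : α ↪ Fin n => ∀ a, f (σ a) = y a).card ≤ ∏ a, typeOf f (y a) := by
  calc _ ≤ (Fintype.piFinset fun a => univ.filter fun j => f j = y a).card :=
        card_le_card_of_injOn (⇑) (fun σ hσ => by simpa using hσ)
          (fun σ _ σ' _ h => DFunLike.coe_injective h)
    _ = _ := Fintype.card_piFinset _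

lemma card_typeClass_filter_mul_descFactorial_le (t : 𝒳 → ℕ) (y : α → 𝒳) (e : α ↪ Fin n) :
    ((typeClass n t).filter fun f => ∀ a, f (e a) = y a).card * n.descFactorial (Fintype.card α)
      ≤ (typeClass n t).card * ∏ a, t (y a) := by
  have hcount := sum_card_bipartiteAbove_eq_sum_card_bipartiteBelow
    (s := (univ : Finset (α ↪ Fin n))) (t := typeClass n t) (r := fun σ f => ∀ a, f (σ a) = y a)
  simp only [bipartiteAbove, bipartiteBelow] at hcount
  calc _ = ∑ σ : α ↪ Fin n, ((typeClass n t).filter fun f => ∀ a, f (σ a) = y a).card := by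
        rw [Finset.sum_congr rfl fun σ _ => card_typeClass_filter_eq t y σ e, sum_const,
          card_univ, Fintype.card_embedding_eq, Fintype.card_fin, smul_eq_mul, mul_comm]
    _ = ∑ f ∈ typeClass n t, (univ.filter fun σ : α ↪ Fin n => ∀ a, f (σ a) = y a).card :=
        hcount
    _ ≤ ∑ f ∈ typeClass n t, ∏ a, t (y a) := sum_le_sum fun f hf => by
        simpa [(mem_filter.mp hf).2] using card_embedding_filter_le f y
    _ = _ := by rw [sum_const, smul_eq_mul]

lemma card_typeClass_filter_div_div_prod_le (hα : Fintype.card α < n) (t : 𝒳 → ℕ)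
    (y : α → 𝒳) (e : α ↪ Fin n) :
    ((((typeClass n t).filter fun f => ∀ a, f (e a) = y a).card : ℝ) / (typeClass n t).card)
        / ∏ a, ((t (y a) : ℝ) / n)
      ≤ ((1 - (Fintype.card α : ℝ) / n)⁻¹) ^ Fintype.card α := by
  set m := Fintype.card α
  set A := ((typeClass n t).filter fun f => ∀ a, f (e a) = y a).card
  set B := (typeClass n t).card
  set P := ∏ a, t (y a)
  have hcount : A * n.descFactorial m ≤ B * P := card_typeClass_filter_mul_descFactorial_le t y e
  have hnm : (0 : ℝ) < n - m := sub_pos.2 (by exact_mod_cast hα)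
  have hn : (0 : ℝ) < n := hnm.trans_le (sub_le_self _ m.cast_nonneg)
  have hdesc : ((n : ℝ) - m) ^ m ≤ n.descFactorial m := by
    calc ((n : ℝ) - m) ^ m ≤ ((n + 1 - m : ℕ) : ℝ) ^ m := by
          gcongr; push_cast [Nat.cast_sub (by omega : m ≤ n + 1)]; linarith
      _ ≤ _ := by exact_mod_cast Nat.pow_sub_le_descFactorial n m
  have hprod : ∏ a, ((t (y a) : ℝ) / n) = (P : ℝ) / n ^ m := by
    rw [prod_div_distrib, prod_const, card_univ, Nat.cast_prod]
  have hinv : (1 - (m : ℝ) / n)⁻¹ = n / (n - m) := by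
    rw [one_sub_div hn.ne', inv_div]
  rw [hprod, hinv, div_pow]
  rcases eq_or_ne (B : ℝ) 0 with hB | hB
  · rw [hB, div_zero, zero_div]; positivity
  rcases eq_or_ne (P : ℝ) 0 with hP | hP
  · rw [hP, zero_div, div_zero]; positivity
  rw [div_div_div_eq, div_le_div_iff₀ (by positivity) (by positivity)]
  calc (A : ℝ) * n ^ m * (n - m) ^ m = n ^ m * (A * (n - m) ^ m) := by ring
    _ ≤ n ^ m * (B * P) := by
        refine mul_le_mul_of_nonneg_left ?_ (by positivity)
        calc (A : ℝ) * (n - m) ^ m ≤ A * n.descFactorial m := by gcongr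
          _ ≤ B * P := by exact_mod_cast hcount

end TypeClass

theorem stmt_1_general {𝒳 : Type*} [Fintype 𝒳] [Nonempty 𝒳] (n k : ℕ) (hk : k < n)
    (t : 𝒳 → ℕ) :
    Real.log (Finset.univ.sup' Finset.univ_nonempty (fun y : Fin k → 𝒳 =>
      let T : Finset (Fin n → 𝒳) := Finset.univ.filter fun f => typeOf f = t
      let marg : ℝ :=
        ((T.filter fun f => ∀ i : Fin k, f (Fin.castLE hk.le i) = y i).card : ℝ) / (T.card : ℝ)
      let prodt : ℝ := ∏ i : Fin k, (t (y i) : ℝ) / n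
      if 0 < marg then marg / prodt else 0))
      ≤ -(k : ℝ) * Real.log (1 - (k : ℝ) / n) := by
  set c : ℝ := ((1 - (k : ℝ) / n)⁻¹) ^ k
  have hn : (0 : ℝ) < n := by exact_mod_cast (Nat.zero_le k).trans_lt hk
  have hkn : (k : ℝ) / n < 1 := (div_lt_one hn).2 (by exact_mod_cast hk)
  have hc : 1 ≤ c :=
    one_le_pow₀ ((one_le_inv₀ (by linarith)).2 (sub_le_self _ (by positivity)))
  have hlog : ∀ x, 0 ≤ x ∧ x ≤ c → Real.log x ≤ Real.log c := fun x ⟨hx0, hxc⟩ => by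
    rcases hx0.eq_or_lt with h | h
    · rw [← h, Real.log_zero]; exact Real.log_nonneg hc
    · exact Real.log_le_log h hxc
  calc _ ≤ Real.log c := by
        refine hlog _ (Finset.sup'_induction (p := fun x => 0 ≤ x ∧ x ≤ c) _ _
          (fun a ha b hb => ⟨ha.1.trans le_sup_left, sup_le ha.2 hb.2⟩) fun y _ => ?_)
        dsimp only
        split_ifs with hpos
        · refine ⟨div_nonneg hpos.le (by positivity), ?_⟩
          have h := card_typeClass_filter_div_div_prod_le
            ((Fintype.card_fin k).symm ▸ hk) t y (Fin.castLEEmb hk.le)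
          rw [Fintype.card_fin] at h
          -- `convert` reconciles `Nat.decidableForallFin` with `Fintype.decidableForallFintype`
          convert h using 7
          exact Iff.rfl
        · exact ⟨le_rfl, zero_le_one.trans hc⟩
    _ = _ := by rw [Real.log_pow, Real.log_inv]; ring

/-- `D_max((u_t)_{[k]} ‖ t^{⊗k}) ≤ -k log(1 - k/n)`, where `u_t` is the
uniform distribution on the type class of the `n`-type `t` and `(u_t)_{[k]}` is its
marginal on the first `k` coordinates. `D_max(p‖q) = log max_{y ∈ supp p} p(y)/q(y)`. -/
theorem stmt_1 {𝒳 : Type*} [Fintype 𝒳] [Nonempty 𝒳] (n k : ℕ) (hk : k < n)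
    (t : 𝒳 → ℕ) (ht : ∑ x, t x = n) (hT : ∃ f : Fin n → 𝒳, typeOf f = t) :
    Real.log (Finset.univ.sup' Finset.univ_nonempty (fun y : Fin k → 𝒳 =>
      let T : Finset (Fin n → 𝒳) := Finset.univ.filter fun f => typeOf f = t
      let marg : ℝ :=
        ((T.filter fun f => ∀ i : Fin k, f (Fin.castLE hk.le i) = y i).card : ℝ) / (T.card : ℝ)
      let prodt : ℝ := ∏ i : Fin k, (t (y i) : ℝ) / n
      if 0 < marg then marg / prodt else 0))
      ≤ -(k : ℝ) * Real.log (1 - (k : ℝ) / n) :=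
  stmt_1_general n k hk t
end
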